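/- arXiv:2106.01275 — 2 statements merged into one kernel-verified Lean document; each statement's English description precedes it below -/
import Mathlib

section
/- Let d ≥ 1 and k ≥ 1, and take displacement p = k. The map x ↦ x₁ mod (2k+1) is a proper coloring of the displacement graph G(d,k,k) with 2k+1 colors: whenever x and y are adjacent in G(d,k,k), x₁ ≢ y₁ (mod 2k+1). -/
/-! If `y ∈ N(x, k, k)` then `|y₁ - x₁| ≤ 2k < 2k + 1`, so equal colours force `y₁ = x₁`.
But then `y - x ∓ k·e₁` spends its whole L1 budget `k` on the first coordinate, so `y = x`. -/

open Finset

/-- The L1 norm on the integer lattice `Fin d → ℤ`. -/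
def norm1 {d : ℕ} (x : Fin d → ℤ) : ℤ := ∑ i, |x i|

/-- The first standard basis vector of `Fin d → ℤ`. -/
def e1 {d : ℕ} : Fin d → ℤ := fun i => if (i : ℕ) = 0 then 1 else 0

/-- `inN p k x y` means `y` belongs to the displaced distance-`k` neighborhood `N(x, p, k)`,
i.e. `‖y − (x + p·e₁)‖₁ ≤ k` or `‖y − (x − p·e₁)‖₁ ≤ k`. -/
def inN {d : ℕ} (p k : ℕ) (x y : Fin d → ℤ) : Prop :=
  norm1 (y - (x + (p : ℤ) • e1)) ≤ (k : ℤ) ∨ norm1 (y - (x - (p : ℤ) • e1)) ≤ (k : ℤ)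


lemma norm1_neg {d : ℕ} (x : Fin d → ℤ) : norm1 (-x) = norm1 x :=
  Finset.sum_congr rfl fun i _ => by simp

lemma inN_symm {d : ℕ} {p k : ℕ} {x y : Fin d → ℤ} (h : inN p k x y) : inN p k y x := by
  rcases h with h | h
  · right
    have hv : x - (y - (p : ℤ) • e1) = -(y - (x + (p : ℤ) • e1)) := by abel
    rw [hv, norm1_neg]; exact h
  · left
    have hv : x - (y + (p : ℤ) • e1) = -(y - (x - (p : ℤ) • e1)) := by abel
    rw [hv, norm1_neg]; exact h

/-- The displacement graph `G(d, p, k)` on the lattice `Fin d → ℤ`: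
distinct `x, y` are adjacent iff `y ∈ N(x, p, k)`. -/
def dispGraph (d p k : ℕ) : SimpleGraph (Fin d → ℤ) where
  Adj x y := x ≠ y ∧ inN p k x y
  symm := ⟨fun _ _ h => ⟨h.1.symm, inN_symm h.2⟩⟩
  loopless := ⟨fun _ h => h.1 rfl⟩

section
variable {d : ℕ}

lemma e1_apply_zero (hd : 0 < d) : e1 (⟨0, hd⟩ : Fin d) = 1 := if_pos rfl

lemma e1_apply_of_ne (hd : 0 < d) {i : Fin d} (hi : i ≠ ⟨0, hd⟩) : e1 i = 0 :=
  if_neg fun h => hi (Fin.ext h)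

lemma abs_apply_le_norm1 (v : Fin d → ℤ) (i : Fin d) : |v i| ≤ norm1 v :=
  single_le_sum (f := fun j => |v j|) (fun _ _ => abs_nonneg _) (mem_univ i)

lemma eq_zero_of_norm1_nonpos {v : Fin d → ℤ} (hv : norm1 v ≤ 0) : v = 0 := by
  funext i
  exact abs_nonpos_iff.mp ((abs_apply_le_norm1 v i).trans hv)

lemma norm1_sub_smul_e1 (hd : 0 < d) (v : Fin d → ℤ) (c : ℤ) :
    norm1 (v - c • e1) = norm1 v - |v ⟨0, hd⟩| + |v ⟨0, hd⟩ - c| := by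
  have hsplit (w : Fin d → ℤ) :
      norm1 w = |w ⟨0, hd⟩| + ∑ i ∈ univ.erase ⟨0, hd⟩, |w i| :=
    (add_sum_erase _ _ (mem_univ _)).symm
  have htail : ∑ i ∈ univ.erase ⟨0, hd⟩, |(v - c • e1 : Fin d → ℤ) i| =
      ∑ i ∈ univ.erase ⟨0, hd⟩, |v i| :=
    sum_congr rfl fun i hi => by
      simp [e1_apply_of_ne hd (ne_of_mem_erase hi)]
  rw [hsplit (v - c • e1), htail, hsplit v, Pi.sub_apply, Pi.smul_apply, e1_apply_zero hd,
    smul_eq_mul, mul_one]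
  ring

lemma exists_norm1_sub_smul_e1_le_of_inN {p k : ℕ} {x y : Fin d → ℤ} (h : inN p k x y) :
    ∃ c : ℤ, |c| = p ∧ norm1 (y - x - c • e1) ≤ k := by
  rcases h with h | h
  · exact ⟨p, by simp, by rwa [sub_sub]⟩
  · exact ⟨-p, by simp, by convert h using 2; module⟩

lemma abs_sub_apply_zero_le_of_inN (hd : 0 < d) {p k : ℕ} {x y : Fin d → ℤ}
    (h : inN p k x y) : |y ⟨0, hd⟩ - x ⟨0, hd⟩| ≤ p + k := by
  obtain ⟨c, hc, hle⟩ := exists_norm1_sub_smul_e1_le_of_inN h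
  have hfirst := (abs_apply_le_norm1 _ ⟨0, hd⟩).trans hle
  simp only [Pi.sub_apply, Pi.smul_apply, e1_apply_zero hd, smul_eq_mul, mul_one] at hfirst
  linarith [abs_sub_abs_le_abs_sub (y ⟨0, hd⟩ - x ⟨0, hd⟩) c]

lemma norm1_sub_add_le_of_inN (hd : 0 < d) {p k : ℕ} {x y : Fin d → ℤ} (h : inN p k x y)
    (h0 : y ⟨0, hd⟩ = x ⟨0, hd⟩) : norm1 (y - x) + p ≤ k := by
  obtain ⟨c, hc, hle⟩ := exists_norm1_sub_smul_e1_le_of_inN h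
  rw [norm1_sub_smul_e1 hd] at hle
  simp only [Pi.sub_apply, h0, sub_self, abs_zero, zero_sub, abs_neg, hc] at hle
  linarith

end

theorem stmt3_general (d : ℕ) (hd : 0 < d) (k : ℕ)
    (x y : Fin d → ℤ) (hadj : (dispGraph d k k).Adj x y) :
    x ⟨0, hd⟩ % (2 * (k : ℤ) + 1) ≠ y ⟨0, hd⟩ % (2 * (k : ℤ) + 1) := by
  obtain ⟨hne, hN⟩ := hadj
  intro hmod
  have hsmall : |y ⟨0, hd⟩ - x ⟨0, hd⟩| < 2 * k + 1 := by
    linarith [abs_sub_apply_zero_le_of_inN hd hN]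
  have hfirst : y ⟨0, hd⟩ - x ⟨0, hd⟩ = 0 := Int.eq_zero_of_abs_lt_dvd (Int.ModEq.dvd hmod) hsmall
  have hnorm := norm1_sub_add_le_of_inN hd hN (sub_eq_zero.mp hfirst)
  exact hne (sub_eq_zero.mp (eq_zero_of_norm1_nonpos (by linarith))).symm

/-- For `d ≥ 1`, `k ≥ 1` and displacement `p = k`, the map `x ↦ x₁ mod (2k+1)` is a proper
coloring of `G(d, k, k)` with `2k+1` colors: adjacent vertices get different colors. -/
theorem stmt3 (d : ℕ) (hd : 0 < d) (k : ℕ) (hk : 1 ≤ k)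
    (x y : Fin d → ℤ) (hadj : (dispGraph d k k).Adj x y) :
    x ⟨0, hd⟩ % (2 * (k : ℤ) + 1) ≠ y ⟨0, hd⟩ % (2 * (k : ℤ) + 1) :=
  stmt3_general d hd k x y hadj
end

section
/- Let d ≥ 1 and let k be an odd natural number. Let B = { x ∈ ℤ^d : ‖x‖₁ ≤ (k−1)/2 } and E = { x ∈ ℤ^d : ‖x‖₁ = (k+1)/2 and x₁ ≥ 1 }. Then any two points x, y ∈ B ∪ E satisfy ‖x − y‖₁ ≤ k; that is, B ∪ E is a distance-k clique of the lattice (the clique underlying the lower bound for the number of colors of a distance-k coloring with no displacement). -/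
/-!
By the triangle inequality `‖x - y‖₁ ≤ ‖x‖₁ + ‖y‖₁`, which is at most `k` unless both points lie
in `E`. Two points of `E` have positive first coordinates, so `|x₁ - y₁| ≤ |x₁| + |y₁| - 2`, and
then `‖x - y‖₁ ≤ (k + 1) - 2 < k`.
-/

open Finset

lemma norm1_sub_le {d : ℕ} (x y : Fin d → ℤ) : norm1 (x - y) ≤ norm1 x + norm1 y := by
  rw [norm1, norm1, norm1, ← sum_add_distrib]
  exact sum_le_sum fun i _ => abs_sub (x i) (y i)

lemma norm1_eq_abs_add_sum_erase {d : ℕ} (i : Fin d) (z : Fin d → ℤ) :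
    norm1 z = |z i| + ∑ j ∈ univ.erase i, |z j| :=
  (add_sum_erase _ _ (mem_univ i)).symm

lemma norm1_sub_add_two_le {d : ℕ} {x y : Fin d → ℤ} (i : Fin d) (hx : 1 ≤ x i) (hy : 1 ≤ y i) :
    norm1 (x - y) + 2 ≤ norm1 x + norm1 y := by
  have hi : |x i - y i| + 2 ≤ |x i| + |y i| := by
    rw [abs_of_pos (a := x i) (by omega), abs_of_pos (a := y i) (by omega)]
    cases abs_cases (x i - y i) <;> omega
  have hrest : ∑ j ∈ univ.erase i, |x j - y j| ≤
      ∑ j ∈ univ.erase i, |x j| + ∑ j ∈ univ.erase i, |y j| := by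
    rw [← sum_add_distrib]
    exact sum_le_sum fun j _ => abs_sub (x j) (y j)
  rw [norm1_eq_abs_add_sum_erase i, norm1_eq_abs_add_sum_erase i x,
    norm1_eq_abs_add_sum_erase i y]
  simp only [Pi.sub_apply]
  linarith

/-- For `d ≥ 1` and odd `k`, the set `B ∪ E`, where `B = { x : ‖x‖₁ ≤ (k−1)/2 }` and
`E = { x : ‖x‖₁ = (k+1)/2 and x₁ ≥ 1 }`, is a distance-`k` clique of the lattice:
any two of its points are at L1 distance at most `k`. -/
theorem stmt12 (d : ℕ) (hd : 0 < d) (k : ℕ) (hk : Odd k)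
    (x y : Fin d → ℤ)
    (hx : x ∈ {z : Fin d → ℤ | norm1 z ≤ ((k : ℤ) - 1) / 2} ∪
          {z : Fin d → ℤ | norm1 z = ((k : ℤ) + 1) / 2 ∧ 1 ≤ z ⟨0, hd⟩})
    (hy : y ∈ {z : Fin d → ℤ | norm1 z ≤ ((k : ℤ) - 1) / 2} ∪
          {z : Fin d → ℤ | norm1 z = ((k : ℤ) + 1) / 2 ∧ 1 ≤ z ⟨0, hd⟩}) :
    norm1 (x - y) ≤ (k : ℤ) := by
  obtain ⟨m, rfl⟩ := hk
  have hB : (((2 * m + 1 : ℕ) : ℤ) - 1) / 2 = m := by omega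
  have hE : (((2 * m + 1 : ℕ) : ℤ) + 1) / 2 = m + 1 := by omega
  simp only [hB, hE, Set.mem_union, Set.mem_ofPred_eq] at hx hy
  have htri := norm1_sub_le x y
  rcases hx with hxB | ⟨hxE, hx₁⟩ <;> rcases hy with hyB | ⟨hyE, hy₁⟩
  · omega
  · omega
  · omega
  · have := norm1_sub_add_two_le ⟨0, hd⟩ hx₁ hy₁
    omega
end
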